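/- arXiv:2507.22015 — 2 statements merged into one kernel-verified Lean document; each statement's English description precedes it below -/
import Mathlib

section
/- For the cycle graph C_n on n ≥ 3 vertices, γ(C_n) = n / (⌊n/2⌋ · ⌈n/2⌉). -/
open Finset SimpleGraph

/-- `max_{uv ∈ E(G)} |x_u - x_v|` (as a real supremum over adjacent pairs). -/
noncomputable def edgeSup {V : Type*} (G : SimpleGraph V) (x : V → ℝ) : ℝ :=
  ⨆ p : {p : V × V // G.Adj p.1 p.2}, |x p.1.1 - x p.1.2|

/-- The `l_∞`-smoothing parameter `γ(G)`. -/
noncomputable def gamma {V : Type*} [Fintype V] (G : SimpleGraph V) : ℝ :=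
  sInf {y | ∃ x : V → ℝ, (∑ v, x v) = 0 ∧ (⨆ v, |x v|) = 1 ∧ y = edgeSup G x}

/-- Transmission of a vertex: sum of graph distances to all vertices. -/
noncomputable def transmission {V : Type*} [Fintype V] (G : SimpleGraph V) (u : V) : ℕ :=
  ∑ v, G.dist u v

/-!
Let `G` be connected on `n` vertices and `tr(u) = ∑_v d(u, v)`. If `∑ x = 0` and `|x_u| = 1`, then
`n = |∑_v (x_u - x_v)| ≤ ∑_v |x_u - x_v|`, and along a shortest path `|x_u - x_v|` is at most
`edgeSup G x · d(u, v)`; so `n ≤ edgeSup G x · tr(u)`. Conversely `x_v = 1 - (n / tr(u)) d(u, v)`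
has sum zero, edge differences at most `n / tr(u)`, and sup norm `1` as soon as
`n · d(u, v) ≤ 2 tr(u)` for all `v`. Hence `γ(G) = n / T` when every vertex has transmission `T`
and this eccentricity condition holds, which is the case for `C_n` with `T = ⌊n/2⌋⌈n/2⌉`.
-/

section edgeSup

variable {V : Type*} {G : SimpleGraph V} (x : V → ℝ)

lemma edgeSup_nonneg : 0 ≤ edgeSup G x :=
  Real.iSup_nonneg fun _ => abs_nonneg _

lemma edgeSup_le {c : ℝ} (hc : 0 ≤ c) (h : ∀ a b, G.Adj a b → |x a - x b| ≤ c) :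
    edgeSup G x ≤ c :=
  Real.iSup_le (fun p => h _ _ p.2) hc

variable [Finite V]

lemma abs_sub_le_edgeSup {a b : V} (h : G.Adj a b) : |x a - x b| ≤ edgeSup G x :=
  le_ciSup (f := fun p : {p : V × V // G.Adj p.1 p.2} => |x p.1.1 - x p.1.2|)
    (Set.finite_range _).bddAbove ⟨(a, b), h⟩

lemma abs_sub_le_edgeSup_mul_length {a b : V} (w : G.Walk a b) :
    |x a - x b| ≤ edgeSup G x * w.length := by
  induction w with
  | nil => simp
  | @cons a c b h w ih =>
    calc |x a - x b| ≤ |x a - x c| + |x c - x b| := abs_sub_le _ _ _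
      _ ≤ edgeSup G x + edgeSup G x * w.length := add_le_add (abs_sub_le_edgeSup x h) ih
      _ = edgeSup G x * (w.cons h).length := by push_cast [Walk.length_cons]; ring

lemma abs_sub_le_edgeSup_mul_dist {a b : V} (h : G.Reachable a b) :
    |x a - x b| ≤ edgeSup G x * G.dist a b := by
  obtain ⟨w, hw⟩ := h.exists_walk_length_eq_dist
  simpa [hw] using abs_sub_le_edgeSup_mul_length x w

end edgeSup

theorem SimpleGraph.Adj.abs_dist_sub_dist_le_one {V : Type*} {G : SimpleGraph V} {u a b : V}
    (h : G.Adj a b) : |(G.dist u b : ℝ) - G.dist u a| ≤ 1 := by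
  obtain ⟨hb, ha⟩ : G.dist u b ≤ G.dist u a + 1 ∧ G.dist u a ≤ G.dist u b + 1 := by
    rcases h.diff_dist_adj (u := u) with h | h | h <;> omega
  rw [abs_sub_le_iff]
  constructor <;> linarith [(by exact_mod_cast hb : (G.dist u b : ℝ) ≤ G.dist u a + 1),
    (by exact_mod_cast ha : (G.dist u a : ℝ) ≤ G.dist u b + 1)]

section gamma

variable {V : Type*} [Fintype V] {G : SimpleGraph V}

lemma card_le_edgeSup_mul_transmission (hG : G.Connected) {x : V → ℝ} (hx : ∑ v, x v = 0)
    {u : V} (hu : |x u| = 1) :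
    (Fintype.card V : ℝ) ≤ edgeSup G x * transmission G u := by
  calc (Fintype.card V : ℝ) = |∑ v, (x u - x v)| := by
        simp [Finset.sum_sub_distrib, hx, abs_mul, hu]
    _ ≤ ∑ v, |x u - x v| := Finset.abs_sum_le_sum_abs _ _
    _ ≤ ∑ v, edgeSup G x * G.dist u v :=
        Finset.sum_le_sum fun v _ => abs_sub_le_edgeSup_mul_dist x (hG u v)
    _ = edgeSup G x * transmission G u := by simp [transmission, Finset.mul_sum]

lemma card_div_le_edgeSup (hG : G.Connected) {T : ℕ} (hT : 0 < T)
    (htr : ∀ u, transmission G u ≤ T) {x : V → ℝ} (hx : ∑ v, x v = 0)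
    (hxsup : ⨆ v, |x v| = 1) :
    Fintype.card V / (T : ℝ) ≤ edgeSup G x := by
  have := hG.nonempty
  obtain ⟨u, hu⟩ := exists_eq_ciSup_of_finite (f := fun v => |x v|)
  rw [div_le_iff₀ (by exact_mod_cast hT)]
  calc (Fintype.card V : ℝ) ≤ edgeSup G x * transmission G u :=
        card_le_edgeSup_mul_transmission hG hx (hu.trans hxsup)
    _ ≤ edgeSup G x * T := by gcongr; exacts [edgeSup_nonneg x, htr u]

lemma exists_edgeSup_le_card_div_transmission (u : V) (htr : 0 < transmission G u)
    (hecc : ∀ v, Fintype.card V * G.dist u v ≤ 2 * transmission G u) :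
    ∃ x : V → ℝ, ∑ v, x v = 0 ∧ ⨆ v, |x v| = 1 ∧
      edgeSup G x ≤ Fintype.card V / (transmission G u : ℝ) := by
  set c : ℝ := Fintype.card V / (transmission G u : ℝ)
  have hc : 0 ≤ c := by positivity
  have hctr : c * transmission G u = Fintype.card V :=
    div_mul_cancel₀ _ (by exact_mod_cast htr.ne')
  have hcdist : ∀ v, c * G.dist u v ≤ 2 := fun v => by
    rw [div_mul_eq_mul_div, div_le_iff₀ (by exact_mod_cast htr)]
    exact_mod_cast hecc v
  refine ⟨fun v => 1 - c * G.dist u v, ?_, ?_, ?_⟩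
  · have hsum : ∑ v, (G.dist u v : ℝ) = transmission G u := by simp [transmission]
    simp only [Finset.sum_sub_distrib, ← Finset.mul_sum, hsum, hctr, sum_const, card_univ,
      nsmul_eq_mul, mul_one, sub_self]
  · have hle : ∀ v, |1 - c * G.dist u v| ≤ 1 := fun v =>
      abs_le.mpr ⟨by linarith [hcdist v], by linarith [mul_nonneg hc (G.dist u v).cast_nonneg]⟩
    have : Nonempty V := ⟨u⟩
    refine le_antisymm (ciSup_le hle) ?_
    simpa using le_ciSup (Set.finite_range fun v => |1 - c * G.dist u v|).bddAbove u
  · refine edgeSup_le _ hc fun a b hab => ?_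
    rw [show 1 - c * G.dist u a - (1 - c * G.dist u b) = c * (G.dist u b - G.dist u a) by ring,
      abs_mul, abs_of_nonneg hc]
    exact mul_le_of_le_one_right hc hab.abs_dist_sub_dist_le_one

theorem gamma_eq_card_div_transmission (hG : G.Connected) {T : ℕ} (hT : 0 < T)
    (htr : ∀ u, transmission G u = T) (u : V)
    (hecc : ∀ v, Fintype.card V * G.dist u v ≤ 2 * T) :
    gamma G = Fintype.card V / (T : ℝ) := by
  have hlow : ∀ x : V → ℝ, ∑ v, x v = 0 → ⨆ v, |x v| = 1 →
      Fintype.card V / (T : ℝ) ≤ edgeSup G x := fun x hx hxsup =>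
    card_div_le_edgeSup hG hT (fun v => (htr v).le) hx hxsup
  obtain ⟨x, hx, hxsup, hxle⟩ :=
    exists_edgeSup_le_card_div_transmission u (htr u ▸ hT) (htr u ▸ hecc)
  rw [htr u] at hxle
  refine IsLeast.csInf_eq ⟨⟨x, hx, hxsup, (le_antisymm hxle (hlow x hx hxsup)).symm⟩, ?_⟩
  rintro y ⟨x, hx, hxsup, rfl⟩
  exact hlow x hx hxsup

end gamma

section cycleGraph

theorem Fin.val_sub_eq_ite {n : ℕ} (a b : Fin n) :
    (a - b).val = if b ≤ a then a.val - b.val else n + a.val - b.val := by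
  have := Fin.intCast_val_sub_eq_sub_add_ite a b
  split_ifs at this ⊢ <;> omega

variable {n : ℕ}

lemma cycleGraph_dist_le_val_sub (u v : Fin (n + 2)) :
    (cycleGraph (n + 2)).dist u v ≤ (v - u).val := by
  induction h : (v - u).val generalizing v with
  | zero => simp [sub_eq_zero.mp (Fin.ext h)]
  | succ k ih =>
    have hadj : (cycleGraph (n + 2)).Adj (v - 1) v := by
      rw [cycleGraph_adj']
      simp only [Fin.val_sub_eq_ite, Fin.val_one] at h ⊢
      split_ifs at h ⊢ <;> fin_omega
    have hk : (v - 1 - u).val = k := by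
      simp only [Fin.val_sub_eq_ite, Fin.val_one] at h ⊢
      split_ifs at h ⊢ <;> fin_omega
    calc (cycleGraph (n + 2)).dist u v
        ≤ (cycleGraph (n + 2)).dist u (v - 1) + (cycleGraph (n + 2)).dist (v - 1) v :=
          cycleGraph_connected.dist_triangle
      _ ≤ k + 1 := add_le_add (ih _ hk) (dist_eq_one_iff_adj.mpr hadj).le

lemma cycleGraph_min_val_sub_le_succ (u : Fin n) {a b : Fin n} (h : (cycleGraph n).Adj a b) :
    min (b - u).val (u - b).val ≤ min (a - u).val (u - a).val + 1 := by
  rw [cycleGraph_adj'] at h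
  simp only [Fin.val_sub_eq_ite] at h ⊢
  split_ifs at h ⊢ <;> fin_omega

theorem cycleGraph_dist (u v : Fin (n + 2)) :
    (cycleGraph (n + 2)).dist u v = min (v - u).val (u - v).val := by
  refine le_antisymm (le_min (cycleGraph_dist_le_val_sub u v)
    (dist_comm (G := cycleGraph (n + 2)) ▸ cycleGraph_dist_le_val_sub v u)) ?_
  -- `w ↦ min (w - u) (u - w)` changes by at most one along edges, so it is bounded by `dist u`
  set f : Fin (n + 2) → ℝ := fun w => (min (w - u).val (u - w).val : ℕ)
  have hf : edgeSup (cycleGraph (n + 2)) f ≤ 1 := edgeSup_le f zero_le_one fun a b hab => by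
    have h₁ : f b ≤ f a + 1 := by
      simp only [f]; exact_mod_cast cycleGraph_min_val_sub_le_succ u hab
    have h₂ : f a ≤ f b + 1 := by
      simp only [f]; exact_mod_cast cycleGraph_min_val_sub_le_succ u hab.symm
    exact abs_sub_le_iff.mpr ⟨by linarith, by linarith⟩
  have key := (abs_sub_le_edgeSup_mul_dist f (cycleGraph_connected u v)).trans
    (mul_le_of_le_one_left (Nat.cast_nonneg _) hf)
  rw [show f u = 0 by simp [f], zero_sub, abs_neg, Nat.abs_cast] at key
  exact_mod_cast key

lemma sum_range_min_sub (n : ℕ) : ∑ k ∈ range n, min k (n - k) = n / 2 * ((n + 1) / 2) := by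
  induction n using Nat.twoStepInduction with
  | zero => simp
  | one => simp
  | more n ih _ =>
    have hshift : ∀ k ∈ range (n + 1), min (k + 1) (n + 2 - (k + 1)) = min k (n - k) + 1 := by
      intro k hk
      rw [mem_range] at hk
      omega
    rw [sum_range_succ', sum_congr rfl hshift, sum_add_distrib, sum_range_succ, ih]
    simp only [Nat.sub_self, Nat.min_zero, Nat.zero_min, sum_const, card_range, smul_eq_mul,
      mul_one, add_zero]
    have h₁ : (n + 2) / 2 = n / 2 + 1 := by omega
    have h₂ : (n + 2 + 1) / 2 = (n + 1) / 2 + 1 := by omega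
    have h₃ : n / 2 + (n + 1) / 2 = n := by omega
    rw [h₁, h₂]
    nlinarith [h₃]

theorem cycleGraph_transmission (u : Fin (n + 2)) :
    transmission (cycleGraph (n + 2)) u = (n + 2) / 2 * ((n + 2 + 1) / 2) := by
  have hsymm : ∀ v : Fin (n + 2),
      min (v - u).val (u - v).val = min (v - u).val (n + 2 - (v - u).val) := by
    intro v
    simp only [Fin.val_sub_eq_ite]
    split_ifs <;> fin_omega
  simp only [transmission, cycleGraph_dist, hsymm]
  rw [← sum_range_min_sub, ← Fin.sum_univ_eq_sum_range (fun k => min k (n + 2 - k))]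
  exact Equiv.sum_comp (Equiv.subRight u) fun z => min z.val (n + 2 - z.val)

lemma cycleGraph_card_mul_dist_le (u v : Fin (n + 2)) :
    (n + 2) * (cycleGraph (n + 2)).dist u v ≤ 2 * ((n + 2) / 2 * ((n + 2 + 1) / 2)) := by
  have hdist : (cycleGraph (n + 2)).dist u v ≤ (n + 2) / 2 := by
    rw [cycleGraph_dist]
    simp only [Fin.val_sub_eq_ite]
    split_ifs <;> fin_omega
  calc (n + 2) * (cycleGraph (n + 2)).dist u v ≤ 2 * ((n + 2 + 1) / 2) * ((n + 2) / 2) :=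
        Nat.mul_le_mul (by omega) hdist
    _ = 2 * ((n + 2) / 2 * ((n + 2 + 1) / 2)) := by ring

end cycleGraph

theorem stmt3 (n : ℕ) (hn : 3 ≤ n) :
    gamma (SimpleGraph.cycleGraph n) =
      (n : ℝ) / (((n / 2 : ℕ) : ℝ) * (((n + 1) / 2 : ℕ) : ℝ)) := by
  obtain ⟨m, rfl⟩ : ∃ m, n = m + 2 := ⟨n - 2, by omega⟩
  have hT : 0 < (m + 2) / 2 * ((m + 2 + 1) / 2) := Nat.mul_pos (by omega) (by omega)
  rw [gamma_eq_card_div_transmission cycleGraph_connected hT cycleGraph_transmission 0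
    (by simpa using cycleGraph_card_mul_dist_le 0), Fintype.card_fin]
  push_cast
  ring
end

section
/- For the t-dimensional hypercube Q_t (the Cartesian product of t copies of K₂), γ(Q_t) = 2/t; more generally for the Hamming graph H(t,s) (product of t copies of K_s, s ≥ 2), γ(H(t,s)) = s/(t(s−1)). -/
/-! Along a shortest path, `|x u - x v| ≤ dist u v * edgeSup G x`. Summing over `v` at a vertex
where `|x u| = 1`, the condition `∑ v, x v = 0` gives `|V| ≤ transmission u * edgeSup G x`, so
`γ(G) ≥ |V| / max_u tr(u)`. Conversely, for `u` of maximal transmission the distance profile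
`x v = 1 - (|V| / tr u) * dist u v` has sum zero, changes by at most `|V| / tr u` along every edge,
and satisfies `|x| ≤ 1` as soon as `|V| * dist u v ≤ 2 * tr u` for all `v`.

In `H(t,s)` the graph distance is the Hamming distance, every vertex has transmission
`t (s - 1) s^(t-1)` and eccentricity `t`, and `s^t * t ≤ 2 t (s - 1) s^(t-1)` holds because
`s ≥ 2`. -/

open Finset SimpleGraph

/-- The Hamming graph `H(t,s)`: vertices are tuples in `{0,…,s-1}^t`, adjacent
iff they differ in exactly one coordinate. `hammingGraph t 2` is the hypercube `Q_t`. -/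
def hammingGraph (t s : ℕ) : SimpleGraph (Fin t → Fin s) where
  Adj x y := hammingDist x y = 1
  symm := ⟨fun x y h => by simpa only [hammingDist_comm] using h⟩
  loopless := ⟨fun x h => by simp [hammingDist_self] at h⟩

namespace SimpleGraph

variable {V : Type*} (G : SimpleGraph V) {x : V → ℝ}

lemma edgeSup_nonneg : 0 ≤ edgeSup G x :=
  Real.iSup_nonneg fun _ ↦ abs_nonneg _

lemma edgeSup_le {c : ℝ} (h : ∀ a b, G.Adj a b → |x a - x b| ≤ c) (hc : 0 ≤ c) :
    edgeSup G x ≤ c :=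
  Real.iSup_le (fun p ↦ h _ _ p.2) hc

variable {G}

lemma Adj.abs_dist_sub_dist_le_one_s19 {u a b : V} (h : G.Adj a b) :
    |(G.dist u a : ℝ) - G.dist u b| ≤ 1 := by
  have := h.diff_dist_adj (u := u)
  rw [abs_sub_le_iff, sub_le_iff_le_add, sub_le_iff_le_add]
  norm_cast
  omega

variable [Finite V]

lemma Adj.abs_sub_le_edgeSup {a b : V} (h : G.Adj a b) : |x a - x b| ≤ edgeSup G x :=
  le_ciSup (Set.finite_range fun p : {p : V × V // G.Adj p.1 p.2} ↦ |x p.1.1 - x p.1.2|).bddAbove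
    ⟨(a, b), h⟩

lemma Walk.abs_sub_le_length_mul_edgeSup {a b : V} (p : G.Walk a b) :
    |x a - x b| ≤ p.length * edgeSup G x := by
  induction p with
  | nil => simp
  | @cons a w b h p ih =>
    calc |x a - x b| ≤ |x a - x w| + |x w - x b| := abs_sub_le _ _ _
      _ ≤ edgeSup G x + p.length * edgeSup G x := add_le_add h.abs_sub_le_edgeSup ih
      _ = (p.cons h).length * edgeSup G x := by push_cast [Walk.length_cons]; ring

lemma Reachable.abs_sub_le_dist_mul_edgeSup {a b : V} (h : G.Reachable a b) :
    |x a - x b| ≤ G.dist a b * edgeSup G x := by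
  obtain ⟨p, hp⟩ := h.exists_walk_length_eq_dist
  simpa [hp] using p.abs_sub_le_length_mul_edgeSup (x := x)

variable [Fintype V]

lemma Connected.card_mul_abs_le_transmission_mul_edgeSup (hG : G.Connected)
    (hx : ∑ v, x v = 0) (u : V) :
    Fintype.card V * |x u| ≤ transmission G u * edgeSup G x := by
  calc Fintype.card V * |x u| = |∑ v, (x u - x v)| := by
        rw [Finset.sum_sub_distrib, hx, sub_zero, Finset.sum_const, Finset.card_univ,
          nsmul_eq_mul, abs_mul, Nat.abs_cast]
    _ ≤ ∑ v, |x u - x v| := Finset.abs_sum_le_sum_abs _ _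
    _ ≤ ∑ v, G.dist u v * edgeSup G x :=
        Finset.sum_le_sum fun v _ ↦ (hG.preconnected u v).abs_sub_le_dist_mul_edgeSup
    _ = transmission G u * edgeSup G x := by simp [transmission, Finset.sum_mul]

variable {u : V}

lemma Connected.card_div_transmission_le_edgeSup (hG : G.Connected)
    (hmax : ∀ v, transmission G v ≤ transmission G u) (hu : 0 < transmission G u)
    {x : V → ℝ} (hx : ∑ v, x v = 0) (hsup : ⨆ v, |x v| = 1) :
    Fintype.card V / transmission G u ≤ edgeSup G x := by
  have := hG.nonempty
  obtain ⟨w, hw⟩ := exists_eq_ciSup_of_finite (f := fun v ↦ |x v|)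
  rw [div_le_iff₀' (by exact_mod_cast hu)]
  calc (Fintype.card V : ℝ) = Fintype.card V * |x w| := by rw [hw, hsup, mul_one]
    _ ≤ transmission G w * edgeSup G x := hG.card_mul_abs_le_transmission_mul_edgeSup hx w
    _ ≤ transmission G u * edgeSup G x := by
        gcongr
        · exact edgeSup_nonneg G
        · exact hmax w

lemma exists_edgeSup_le_card_div_transmission (hu : 0 < transmission G u)
    (hecc : ∀ v, Fintype.card V * G.dist u v ≤ 2 * transmission G u) :
    ∃ x : V → ℝ, ∑ v, x v = 0 ∧ ⨆ v, |x v| = 1 ∧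
      edgeSup G x ≤ Fintype.card V / transmission G u := by
  set c : ℝ := Fintype.card V / transmission G u
  have hc : 0 ≤ c := by positivity
  have hct : c * transmission G u = Fintype.card V := div_mul_cancel₀ _ (by positivity)
  have hcd (v : V) : c * G.dist u v ≤ 2 := by
    rw [div_mul_eq_mul_div, div_le_iff₀ (by exact_mod_cast hu)]
    exact_mod_cast hecc v
  have habs (v : V) : |1 - c * G.dist u v| ≤ 1 := by
    rw [abs_le]
    constructor <;> nlinarith [hcd v, mul_nonneg hc (Nat.cast_nonneg (G.dist u v))]
  refine ⟨fun v ↦ 1 - c * G.dist u v, ?_, ?_, ?_⟩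
  · simp only [Finset.sum_sub_distrib, ← Finset.mul_sum, transmission] at hct ⊢
    simp [← hct]
  · refine le_antisymm (Real.iSup_le habs zero_le_one) ?_
    refine le_ciSup_of_le (Set.finite_range _).bddAbove u ?_
    simp
  · refine edgeSup_le G (fun a b h ↦ ?_) hc
    calc |1 - c * G.dist u a - (1 - c * G.dist u b)| = |c * (G.dist u b - G.dist u a)| := by
          ring_nf
      _ = c * |(G.dist u a : ℝ) - G.dist u b| := by rw [abs_mul, abs_of_nonneg hc, abs_sub_comm]
      _ ≤ c := mul_le_of_le_one_right hc h.abs_dist_sub_dist_le_one_s19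

theorem Connected.gamma_eq_card_div_transmission (hG : G.Connected)
    (hmax : ∀ v, transmission G v ≤ transmission G u) (hu : 0 < transmission G u)
    (hecc : ∀ v, Fintype.card V * G.dist u v ≤ 2 * transmission G u) :
    gamma G = Fintype.card V / transmission G u := by
  obtain ⟨x, hx, hsup, hle⟩ := exists_edgeSup_le_card_div_transmission hu hecc
  refine IsLeast.csInf_eq ⟨⟨x, hx, hsup, ?_⟩, ?_⟩
  · exact le_antisymm (hG.card_div_transmission_le_edgeSup hmax hu hx hsup) hle
  · rintro _ ⟨y, hy, hysup, rfl⟩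
    exact hG.card_div_transmission_le_edgeSup hmax hu hy hysup

end SimpleGraph

section Hamming

variable {ι : Type*} [Fintype ι] [DecidableEq ι] {β : ι → Type*} [∀ i, DecidableEq (β i)]

lemma hammingDist_update_self {u : ∀ i, β i} {i : ι} {a : β i} (ha : u i ≠ a) :
    hammingDist u (Function.update u i a) = 1 := by
  rw [hammingDist, Finset.card_eq_one]
  refine ⟨i, Finset.ext fun j ↦ ?_⟩
  by_cases hj : j = i
  · subst hj; simpa using ha
  · simp [hj]

lemma hammingDist_update_left_add_one {u v : ∀ i, β i} {i : ι} (hi : u i ≠ v i) :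
    hammingDist (Function.update u i (v i)) v + 1 = hammingDist u v := by
  have : ({j | Function.update u i (v i) j ≠ v j} : Finset ι) =
      ({j | u j ≠ v j} : Finset ι).erase i := by
    ext j
    by_cases hj : j = i
    · subst hj; simp
    · simp [hj]
  rw [hammingDist, hammingDist, this, Finset.card_erase_add_one (by simpa using hi)]

end Hamming

section Counting

variable {ι β : Type*} [Fintype ι] [DecidableEq ι] [Fintype β] [DecidableEq β]

lemma card_filter_apply_ne (i : ι) (a : β) :
    #{f : ι → β | f i ≠ a} =
      (Fintype.card β - 1) * Fintype.card β ^ (Fintype.card ι - 1) := by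
  have heq : #{f : ι → β | f i = a} = Fintype.card β ^ (Fintype.card ι - 1) := by
    simpa using Fintype.card_filter_piFinset_const (univ : Finset β) i a
  have hsplit := Finset.card_filter_add_card_filter_not (s := univ) (fun f : ι → β ↦ f i = a)
  have hcard : Fintype.card β ^ Fintype.card ι =
      Fintype.card β * Fintype.card β ^ (Fintype.card ι - 1) := by
    have : Nonempty ι := ⟨i⟩
    rw [← pow_succ', Nat.sub_add_cancel Fintype.card_pos]
  rw [Finset.card_univ, Fintype.card_fun, heq, hcard, add_comm] at hsplit
  rw [Nat.sub_one_mul]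
  exact Nat.eq_sub_of_add_eq hsplit

lemma sum_hammingDist_right (u : ι → β) :
    ∑ v, hammingDist u v =
      Fintype.card ι * ((Fintype.card β - 1) * Fintype.card β ^ (Fintype.card ι - 1)) := by
  calc ∑ v, hammingDist u v = ∑ i, #{v : ι → β | v i ≠ u i} := by
        simp only [hammingDist, Finset.card_filter, ne_comm (a := u _)]
        exact Finset.sum_comm
    _ = _ := by simp [card_filter_apply_ne]

end Counting

variable {t s : ℕ}

lemma exists_walk_length_eq_hammingDist (u v : Fin t → Fin s) :
    ∃ p : (hammingGraph t s).Walk u v, p.length = hammingDist u v := by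
  induction h : hammingDist u v generalizing u with
  | zero =>
    obtain rfl := hammingDist_eq_zero.mp h
    exact ⟨.nil, rfl⟩
  | succ n ih =>
    obtain ⟨i, hi⟩ := Function.ne_iff.mp ((hammingDist_pos (x := u) (y := v)).mp (by omega))
    have hadj : (hammingGraph t s).Adj u (Function.update u i (v i)) := hammingDist_update_self hi
    have hdist := hammingDist_update_left_add_one hi
    obtain ⟨p, hp⟩ := ih (Function.update u i (v i)) (by omega)
    exact ⟨p.cons hadj, by rw [Walk.length_cons, hp]⟩

lemma SimpleGraph.Walk.hammingDist_le_length {u v : Fin t → Fin s}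
    (p : (hammingGraph t s).Walk u v) : hammingDist u v ≤ p.length := by
  induction p with
  | nil => simp
  | @cons a w b h p ih =>
    have : hammingDist a w = 1 := h
    have := hammingDist_triangle a w b
    rw [Walk.length_cons]
    omega

lemma hammingGraph_dist (u v : Fin t → Fin s) :
    (hammingGraph t s).dist u v = hammingDist u v := by
  obtain ⟨p, hp⟩ := exists_walk_length_eq_hammingDist u v
  obtain ⟨q, hq⟩ := (Walk.reachable p).exists_walk_length_eq_dist
  exact le_antisymm (hp ▸ dist_le p) (hq ▸ q.hammingDist_le_length)

lemma hammingGraph_connected (hs : 0 < s) : (hammingGraph t s).Connected where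
  preconnected u v := ⟨(exists_walk_length_eq_hammingDist u v).choose⟩
  nonempty := ⟨fun _ ↦ ⟨0, hs⟩⟩

lemma transmission_hammingGraph (u : Fin t → Fin s) :
    transmission (hammingGraph t s) u = t * ((s - 1) * s ^ (t - 1)) := by
  simp [transmission, hammingGraph_dist, sum_hammingDist_right]

lemma gamma_hammingGraph (ht : 1 ≤ t) (hs : 2 ≤ s) :
    gamma (hammingGraph t s) = s / (t * (s - 1)) := by
  let u : Fin t → Fin s := fun _ ↦ ⟨0, by omega⟩
  have hpow : s ^ t = s * s ^ (t - 1) := by rw [← pow_succ', Nat.sub_add_cancel ht]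
  have hmax (v : Fin t → Fin s) :
      transmission (hammingGraph t s) v ≤ transmission (hammingGraph t s) u := by
    rw [transmission_hammingGraph, transmission_hammingGraph]
  have hpos : 0 < transmission (hammingGraph t s) u := by
    rw [transmission_hammingGraph]
    exact Nat.mul_pos ht (Nat.mul_pos (by omega) (pow_pos (by omega) _))
  have hecc (v : Fin t → Fin s) :
      Fintype.card (Fin t → Fin s) * (hammingGraph t s).dist u v ≤
        2 * transmission (hammingGraph t s) u := by
    rw [transmission_hammingGraph, hammingGraph_dist, Fintype.card_fun, Fintype.card_fin,
      Fintype.card_fin]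
    calc s ^ t * hammingDist u v ≤ s ^ t * t := by
          gcongr; simpa using hammingDist_le_card_fintype (x := u) (y := v)
      _ = t * (s * s ^ (t - 1)) := by rw [hpow, mul_comm]
      _ ≤ t * (2 * (s - 1) * s ^ (t - 1)) := by gcongr; omega
      _ = 2 * (t * ((s - 1) * s ^ (t - 1))) := by ring
  rw [(hammingGraph_connected (by omega)).gamma_eq_card_div_transmission hmax hpos hecc,
    transmission_hammingGraph, Fintype.card_fun, Fintype.card_fin, Fintype.card_fin, hpow]
  push_cast [Nat.cast_sub (by omega : 1 ≤ s)]
  field_simp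

theorem stmt19 (t s : ℕ) (ht : 1 ≤ t) (hs : 2 ≤ s) :
    gamma (hammingGraph t 2) = 2 / (t : ℝ) ∧
      gamma (hammingGraph t s) = (s : ℝ) / ((t : ℝ) * ((s : ℝ) - 1)) := by
  refine ⟨?_, gamma_hammingGraph ht hs⟩
  rw [gamma_hammingGraph ht le_rfl]
  norm_num
end
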